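/- Let (Ω, F, P) be a probability space, [a, b] ⊂ ℝ with a < b, B the Borel σ-algebra of [a, b], and μ a map assigning to each A ∈ B a real-valued random variable μ(A), such that the family { Σ_{k=1}^{n} c_k μ(A_k) : n ≥ 1, A_1, …, A_n ∈ B pairwise disjoint, |c_k| ≤ 1 } is bounded in probability, and such that the stochastic process μ(t) := μ([a, t]), a ≤ t ≤ b, has continuous paths almost surely and satisfies μ((s, t]) = μ(t) − μ(s) a.s. for a ≤ s ≤ t ≤ b. Then for every p ≥ 2 and 0 < α < 1/p, almost surely Σ_{n=1}^{∞} 2^{n(αp − 1)} Σ_{k=1}^{2^n} | μ(a + k·2^{−n}(b − a)) − μ(a + (k − 1)·2^{−n}(b − a)) |^p < ∞. -/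

import Mathlib

/-!
Write `g n k` for the increments of `t ↦ μ([a, t])` over the dyadic intervals of level `n` and
`r = 2 ^ (α p - 1) < 1`. For every level `N` and every choice of signs `c n k = ±1`, the sum
`∑_{n < N, k} c n k · √r ^ n · g n k` can be refined to level `N`, where it becomes
`∑_j d j · μ(Δ_j)` over the disjoint dyadic intervals `Δ_j` of level `N`, with
`|d j| ≤ ∑ √r ^ n ≤ 1 / (1 - √r)`; so all these signed sums are bounded in probability.
Averaging over the signs (Paley–Zygmund on the finite cube of signs, via the Rademacher moments
`𝔼 Z² = ∑ x²` and `𝔼 Z⁴ ≤ 3 (∑ x²)²`) bounds the squares `∑_{n < N} r ^ n ∑_k g n k ²` in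
probability, uniformly in `N`; being monotone in `N`, they are then almost surely bounded.
Finally a continuous path is bounded on `[a, b]`, so `|g n k| ^ p ≤ (2 M) ^ (p - 2) · g n k ²`.
-/

open MeasureTheory Finset
open scoped ENNReal

section RademacherSums

variable {ι : Type*} [Fintype ι]

lemma units_int_cast_sq (u : ℤˣ) : (u : ℝ) ^ 2 = 1 := by
  rcases Int.units_eq_one_or u with rfl | rfl <;> simp

lemma abs_units_int_cast (u : ℤˣ) : |(u : ℝ)| = 1 := by
  rcases Int.units_eq_one_or u with rfl | rfl <;> simp

variable [DecidableEq ι]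

lemma card_sign_vectors : Fintype.card (ι → ℤˣ) = 2 ^ Fintype.card ι := by
  simp

lemma sum_sign_mul_eq_zero (j : ι) (F : (ι → ℤˣ) → ℝ)
    (hF : ∀ c u, F (Function.update c j u) = F c) :
    ∑ c : ι → ℤˣ, (c j : ℝ) * F c = 0 := by
  have flip : Function.Involutive fun c : ι → ℤˣ => Function.update c j (-c j) := fun c => by
    simp
  have h := Fintype.sum_bijective _ flip.bijective (fun c => (c j : ℝ) * F c)
    (fun c => -((c j : ℝ) * F c)) fun c => by simp [hF]
  rw [sum_neg_distrib] at h
  linarith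

lemma sum_sign_mul_sum_eq_zero {s : Finset ι} {j : ι} (hj : j ∉ s) (x : ι → ℝ) (G : ℝ → ℝ) :
    ∑ c : ι → ℤˣ, (c j : ℝ) * G (∑ i ∈ s, (c i : ℝ) * x i) = 0 :=
  sum_sign_mul_eq_zero j _ fun c u => by
    congr 1
    refine sum_congr rfl fun i hi => ?_
    rw [Function.update_of_ne (ne_of_mem_of_not_mem hi hj)]

lemma sum_sum_sign_mul_sq (x : ι → ℝ) (s : Finset ι) :
    ∑ c : ι → ℤˣ, (∑ i ∈ s, (c i : ℝ) * x i) ^ 2 = 2 ^ Fintype.card ι * ∑ i ∈ s, x i ^ 2 := by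
  induction s using Finset.induction_on with
  | empty => simp
  | insert j s hj ih =>
    have expand : ∀ c : ι → ℤˣ, (∑ i ∈ insert j s, (c i : ℝ) * x i) ^ 2 =
        (∑ i ∈ s, (c i : ℝ) * x i) ^ 2 + x j ^ 2 +
          (c j : ℝ) * (2 * x j * ∑ i ∈ s, (c i : ℝ) * x i) := fun c => by
      rw [sum_insert hj]
      linear_combination x j ^ 2 * units_int_cast_sq (c j)
    simp_rw [expand]
    rw [sum_add_distrib, sum_add_distrib, ih, sum_const, card_univ,
      card_sign_vectors, sum_sign_mul_sum_eq_zero hj x (fun z => 2 * x j * z), sum_insert hj,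
      nsmul_eq_mul]
    push_cast
    ring

lemma sum_sum_sign_mul_pow_four_le (x : ι → ℝ) (s : Finset ι) :
    ∑ c : ι → ℤˣ, (∑ i ∈ s, (c i : ℝ) * x i) ^ 4 ≤
      3 * 2 ^ Fintype.card ι * (∑ i ∈ s, x i ^ 2) ^ 2 := by
  induction s using Finset.induction_on with
  | empty => simp
  | insert j s hj ih =>
    have expand : ∀ c : ι → ℤˣ, (∑ i ∈ insert j s, (c i : ℝ) * x i) ^ 4 =
        (∑ i ∈ s, (c i : ℝ) * x i) ^ 4 + 6 * x j ^ 2 * (∑ i ∈ s, (c i : ℝ) * x i) ^ 2 + x j ^ 4 +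
          (c j : ℝ) * (4 * x j ^ 3 * (∑ i ∈ s, (c i : ℝ) * x i) +
            4 * x j * (∑ i ∈ s, (c i : ℝ) * x i) ^ 3) := fun c => by
      rw [sum_insert hj]
      linear_combination (x j ^ 4 * ((c j : ℝ) ^ 2 + 1) +
        4 * x j ^ 3 * (∑ i ∈ s, (c i : ℝ) * x i) * (c j : ℝ) +
        6 * x j ^ 2 * (∑ i ∈ s, (c i : ℝ) * x i) ^ 2) * units_int_cast_sq (c j)
    simp_rw [expand]
    rw [sum_add_distrib, sum_add_distrib, sum_add_distrib, ← mul_sum,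
      sum_sum_sign_mul_sq, sum_const, card_univ, card_sign_vectors,
      sum_sign_mul_sum_eq_zero hj x (fun z => 4 * x j ^ 3 * z + 4 * x j * z ^ 3),
      sum_insert hj, nsmul_eq_mul]
    have hS : 0 ≤ ∑ i ∈ s, x i ^ 2 := sum_nonneg fun i _ => sq_nonneg _
    have h2 : (0 : ℝ) < 2 ^ Fintype.card ι := by positivity
    push_cast
    nlinarith [mul_nonneg h2.le (mul_nonneg (sq_nonneg (x j)) hS),
      mul_nonneg h2.le (sq_nonneg (x j ^ 2))]

/-- Paley–Zygmund for Rademacher sums: `Z = ∑ cᵢ xᵢ` satisfies `Z² > 𝔼 Z² / 2` for at least a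
twelfth of the sign vectors, since `𝔼 Z⁴ ≤ 3 (𝔼 Z²)²`. -/
lemma two_pow_card_le_twelve_mul_card_half_lt_sq (x : ι → ℝ) (hx : 0 < ∑ i, x i ^ 2) :
    2 ^ Fintype.card ι ≤
      12 * #{c : ι → ℤˣ | (∑ i, x i ^ 2) / 2 < (∑ i, (c i : ℝ) * x i) ^ 2} := by
  set S := ∑ i, x i ^ 2
  set Z := fun c : ι → ℤˣ => ∑ i, (c i : ℝ) * x i
  set F := ({c | S / 2 < Z c ^ 2} : Finset (ι → ℤˣ))
  set m := Fintype.card ι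
  have small_off_F : ∑ c ∈ univ.filter (fun c => ¬ S / 2 < Z c ^ 2), Z c ^ 2 ≤ 2 ^ m * (S / 2) :=
    calc _ ≤ ∑ _c ∈ univ.filter (fun c => ¬ S / 2 < Z c ^ 2), S / 2 :=
          sum_le_sum fun c hc => not_lt.mp (mem_filter.mp hc).2
      _ ≤ ∑ _c : ι → ℤˣ, S / 2 := sum_le_sum_of_subset_of_nonneg (filter_subset _ _)
          fun _ _ _ => by positivity
      _ = 2 ^ m * (S / 2) := by simp [m]
  have large_on_F : 2 ^ m * (S / 2) ≤ ∑ c ∈ F, Z c ^ 2 := by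
    have := sum_sum_sign_mul_sq x univ
    rw [← sum_filter_add_sum_filter_not univ (fun c => S / 2 < Z c ^ 2)] at this
    linarith
  have cauchy_schwarz : (∑ c ∈ F, Z c ^ 2) ^ 2 ≤ #F * (3 * 2 ^ m * S ^ 2) :=
    calc _ ≤ #F * ∑ c ∈ F, (Z c ^ 2) ^ 2 := sq_sum_le_card_mul_sum_sq
      _ = #F * ∑ c ∈ F, Z c ^ 4 := by simp_rw [← pow_mul]
      _ ≤ #F * ∑ c : ι → ℤˣ, Z c ^ 4 := by
          gcongr
          exact subset_univ F
      _ ≤ #F * (3 * 2 ^ m * S ^ 2) := by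
          gcongr
          exact sum_sum_sign_mul_pow_four_le x univ
  have key : 2 ^ m * S ^ 2 * 2 ^ m ≤ 2 ^ m * S ^ 2 * (12 * #F) := by
    nlinarith [(pow_le_pow_left₀ (by positivity) large_on_F 2).trans cauchy_schwarz]
  exact_mod_cast le_of_mul_le_mul_left key (by positivity)

end RademacherSums

section Probability

variable {Ω : Type*} [MeasurableSpace Ω]

open scoped Classical in
/-- The sets `B c` need not be measurable: the `μ A` of the theorem are not assumed to be
measurable in `ω`. -/
lemma mul_measure_le_sum_measure {γ : Type*} [Fintype γ] (P : Measure Ω) (B : γ → Set Ω)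
    {A : Set Ω} {t : ℝ≥0∞} (hA : ∀ ω ∈ A, t ≤ #{c | ω ∈ B c}) :
    t * P A ≤ ∑ c, P (B c) := by
  set N : Ω → ℝ≥0∞ := fun ω => ∑ c, (toMeasurable P (B c)).indicator 1 ω
  have hN : Measurable N :=
    Finset.measurable_sum _ fun c _ => measurable_one.indicator (measurableSet_toMeasurable _ _)
  have hAN : A ⊆ {ω | t ≤ N ω} := fun ω hω => by
    refine (hA ω hω).trans ?_
    rw [card_filter, Nat.cast_sum]
    refine sum_le_sum fun c _ => ?_
    split_ifs with h
    · simp [subset_toMeasurable P (B c) h]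
    · simp
  calc t * P A ≤ t * P {ω | t ≤ N ω} := by gcongr
    _ ≤ ∫⁻ ω, N ω ∂P := mul_meas_ge_le_lintegral₀ hN.aemeasurable t
    _ = ∑ c, P (B c) := by
      rw [lintegral_finsetSum _ fun c _ =>
        measurable_one.indicator (measurableSet_toMeasurable _ _)]
      simp_rw [lintegral_indicator_one (measurableSet_toMeasurable _ _), measure_toMeasurable]

theorem measure_two_mul_sq_lt_sum_sq_le {ι : Type*} [Fintype ι] (P : Measure Ω)
    (X : ι → Ω → ℝ) (C : ℝ) (ε : ℝ≥0∞)
    (h : ∀ c : ι → ℤˣ, P {ω | C < |∑ i, (c i : ℝ) * X i ω|} ≤ ε) :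
    P {ω | 2 * C ^ 2 < ∑ i, X i ω ^ 2} ≤ 12 * ε := by
  classical
  set m := Fintype.card ι
  have many_signs : ∀ ω ∈ {ω | 2 * C ^ 2 < ∑ i, X i ω ^ 2},
      (2 ^ m / 12 : ℝ≥0∞) ≤ #{c : ι → ℤˣ | ω ∈ {ω | C < |∑ i, (c i : ℝ) * X i ω|}} := by
    intro ω hω
    have hS : 0 < ∑ i, X i ω ^ 2 := lt_of_le_of_lt (by positivity) hω
    have hcard := two_pow_card_le_twelve_mul_card_half_lt_sq (fun i => X i ω) hS
    have hsub : #{c : ι → ℤˣ | (∑ i, X i ω ^ 2) / 2 < (∑ i, (c i : ℝ) * X i ω) ^ 2} ≤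
        #{c : ι → ℤˣ | ω ∈ {ω | C < |∑ i, (c i : ℝ) * X i ω|}} := by
      refine card_le_card fun c hc => ?_
      simp only [mem_filter, mem_univ, true_and, Set.mem_ofPred_eq] at hc ⊢
      have : |C| < |∑ i, (c i : ℝ) * X i ω| := sq_lt_sq.mp (by linarith [hω.out])
      exact (le_abs_self C).trans_lt this
    refine ENNReal.div_le_of_le_mul ?_
    exact_mod_cast hcard.trans (by rw [mul_comm]; gcongr)
  have hm : (2 ^ m / 12 : ℝ≥0∞) ≠ 0 := by simp
  have hm' : (2 ^ m / 12 : ℝ≥0∞) ≠ ⊤ := by simp [ENNReal.div_eq_top]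
  rw [← ENNReal.mul_le_mul_iff_right hm hm']
  calc _ ≤ ∑ c : ι → ℤˣ, P {ω | C < |∑ i, (c i : ℝ) * X i ω|} :=
        mul_measure_le_sum_measure P _ many_signs
    _ ≤ ∑ _c : ι → ℤˣ, ε := sum_le_sum fun c _ => h c
    _ = 2 ^ m / 12 * (12 * ε) := by
      rw [sum_const, card_univ, card_sign_vectors, nsmul_eq_mul, ← mul_assoc,
        ENNReal.div_mul_cancel (by norm_num) (by norm_num)]
      norm_cast

theorem measure_two_mul_sq_lt_sum_sq_le_of_finset {ι : Type*} (P : Measure Ω) (s : Finset ι)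
    (X : ι → Ω → ℝ) (C : ℝ) (ε : ℝ≥0∞)
    (h : ∀ c : ι → ℤˣ, P {ω | C < |∑ i ∈ s, (c i : ℝ) * X i ω|} ≤ ε) :
    P {ω | 2 * C ^ 2 < ∑ i ∈ s, X i ω ^ 2} ≤ 12 * ε := by
  classical
  simp_rw [← sum_coe_sort s]
  refine measure_two_mul_sq_lt_sum_sq_le P (fun i : s => X i) C ε fun c => ?_
  convert h fun i => if hi : i ∈ s then c ⟨i, hi⟩ else 1 using 5 with ω
  rw [← sum_coe_sort s]
  simp

theorem ae_bddAbove_range_of_monotone (P : Measure Ω) {S : ℕ → Ω → ℝ}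
    (hS : ∀ ω, Monotone fun N => S N ω)
    (h : ∀ δ : ℝ, 0 < δ → ∃ K : ℝ, ∀ N, P {ω | K < S N ω} ≤ ENNReal.ofReal δ) :
    ∀ᵐ ω ∂P, BddAbove (Set.range fun N => S N ω) := by
  refine ae_iff.mpr (nonpos_iff_eq_zero.mp (le_of_forall_gt_imp_ge_of_dense fun ε hε => ?_))
  obtain ⟨δ, -, hδ, hδε⟩ := ENNReal.lt_iff_exists_real_btwn.mp hε
  obtain ⟨K, hK⟩ := h δ (ENNReal.ofReal_pos.mp hδ)
  have hmono : Monotone fun N => {ω | K < S N ω} := fun N N' hN ω hω =>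
    lt_of_lt_of_le hω (hS ω hN)
  calc P {ω | ¬BddAbove (Set.range fun N => S N ω)} ≤ P (⋃ N, {ω | K < S N ω}) :=
        measure_mono fun ω hω => by
          obtain ⟨_, ⟨N, rfl⟩, hN⟩ := not_bddAbove_iff.mp hω K
          exact Set.mem_iUnion.mpr ⟨N, hN⟩
    _ = ⨆ N, P {ω | K < S N ω} := hmono.measure_iUnion
    _ ≤ ε := iSup_le fun N => (hK N).trans hδε.le

lemma sum_range_mul_sub_eq_sum_range_mul (u w : ℕ → ℝ) (q M : ℕ) :
    ∑ k ∈ range M, w k * (u ((k + 1) * q) - u (k * q)) =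
      ∑ j ∈ range (M * q), w (j / q) * (u (j + 1) - u j) := by
  induction M with
  | zero => simp
  | succ M ih =>
    have block : ∑ i ∈ range q, w ((M * q + i) / q) * (u (M * q + i + 1) - u (M * q + i)) =
        w M * (u (M * q + q) - u (M * q)) := by
      rw [sum_congr rfl fun i hi => by
        rw [Nat.div_eq_of_lt_le (k := M) (by lia) (by simp at hi; lia)], ← mul_sum]
      exact congrArg (w M * ·) (sum_range_sub (fun i => u (M * q + i)) q)
    rw [sum_range_succ, ih, add_mul, one_mul, sum_range_add, block]

noncomputable def dyadicIncrement (f : ℝ → ℝ) (a b : ℝ) (n k : ℕ) : ℝ :=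
  f (a + ((k : ℝ) + 1) * (b - a) / 2 ^ n) - f (a + (k : ℝ) * (b - a) / 2 ^ n)

lemma dyadic_point_eq_of_le (a b : ℝ) (k : ℕ) {n N : ℕ} (h : n ≤ N) :
    a + (k : ℝ) * (b - a) / 2 ^ n = a + ((k * 2 ^ (N - n) : ℕ) : ℝ) * (b - a) / 2 ^ N := by
  rw [← Nat.add_sub_of_le h, pow_add, Nat.add_sub_cancel_left]
  push_cast
  field_simp

lemma dyadic_point_mem_Icc {a b : ℝ} (hab : a ≤ b) {n k : ℕ} (hk : k ≤ 2 ^ n) :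
    a + (k : ℝ) * (b - a) / 2 ^ n ∈ Set.Icc a b := by
  have hk0 : 0 ≤ (k : ℝ) / 2 ^ n := by positivity
  have hk1 : (k : ℝ) / 2 ^ n ≤ 1 := div_le_one_of_le₀ (by exact_mod_cast hk) (by positivity)
  rw [mul_div_right_comm]
  constructor <;> nlinarith

lemma sum_mul_dyadicIncrement_eq_of_le (f : ℝ → ℝ) (a b : ℝ) (w : ℕ → ℝ) {n N : ℕ}
    (h : n ≤ N) :
    ∑ k ∈ range (2 ^ n), w k * dyadicIncrement f a b n k =
      ∑ j ∈ range (2 ^ N), w (j / 2 ^ (N - n)) * dyadicIncrement f a b N j := by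
  have hN : 2 ^ N = 2 ^ n * 2 ^ (N - n) := by rw [← pow_add, Nat.add_sub_of_le h]
  have := sum_range_mul_sub_eq_sum_range_mul (fun j => f (a + (j : ℝ) * (b - a) / 2 ^ N)) w
    (2 ^ (N - n)) (2 ^ n)
  simp only [← dyadic_point_eq_of_le a b _ h, Nat.cast_add, Nat.cast_one] at this
  simpa only [dyadicIncrement, hN, Nat.cast_add, Nat.cast_one] using this

theorem measure_lt_sum_sum_sq_dyadicIncrement_le (P : Measure Ω) (F : Ω → ℝ → ℝ) (a b : ℝ)
    {ρ : ℝ} (hρ0 : 0 ≤ ρ) (hρ1 : ρ < 1) (C : ℝ) (ε : ℝ≥0∞)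
    (h : ∀ (N : ℕ) (e : ℕ → ℝ), (∀ j, |e j| ≤ 1) →
      P {ω | C < |∑ j ∈ range (2 ^ N), e j * dyadicIncrement (F ω) a b N j|} ≤ ε) (N : ℕ) :
    P {ω | 2 * (C / (1 - ρ)) ^ 2 <
      ∑ n ∈ range N, ∑ k ∈ range (2 ^ n), (ρ ^ n * dyadicIncrement (F ω) a b n k) ^ 2} ≤
      12 * ε := by
  have h1ρ : 0 < 1 - ρ := by linarith
  have := measure_two_mul_sq_lt_sum_sq_le_of_finset P ((range N).sigma fun n => range (2 ^ n))
    (fun i ω => ρ ^ i.1 * dyadicIncrement (F ω) a b i.1 i.2) (C / (1 - ρ)) ε fun c => by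
      set d : ℕ → ℝ := fun j => ∑ n ∈ range N, ρ ^ n * c ⟨n, j / 2 ^ (N - n)⟩
      have hd : ∀ j, |(1 - ρ) * d j| ≤ 1 := fun j => by
        calc |(1 - ρ) * d j| ≤ (1 - ρ) * ∑ n ∈ range N, |ρ ^ n * c ⟨n, j / 2 ^ (N - n)⟩| := by
              rw [abs_mul, abs_of_pos h1ρ]
              gcongr
              exact abs_sum_le_sum_abs _ _
          _ = 1 - ρ ^ N := by
              simp_rw [abs_mul, abs_of_nonneg (pow_nonneg hρ0 _), abs_units_int_cast, mul_one,
                mul_neg_geom_sum]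
          _ ≤ 1 := by linarith [pow_nonneg hρ0 N]
      refine le_trans (measure_mono fun ω hω => ?_) (h N _ hd)
      have refine_sum : ∑ i ∈ (range N).sigma (fun n => range (2 ^ n)),
            (c i : ℝ) * (ρ ^ i.1 * dyadicIncrement (F ω) a b i.1 i.2) =
          ∑ j ∈ range (2 ^ N), d j * dyadicIncrement (F ω) a b N j := by
        simp_rw [sum_sigma, d, sum_mul]
        rw [sum_comm]
        refine sum_congr rfl fun n hn => ?_
        rw [← sum_mul_dyadicIncrement_eq_of_le _ a b (fun k => ρ ^ n * c ⟨n, k⟩)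
          (mem_range.mp hn).le]
        exact sum_congr rfl fun k _ => by ring
      rw [Set.mem_ofPred_eq, refine_sum, div_lt_iff₀ h1ρ] at hω
      refine hω.trans_eq ?_
      simp_rw [mul_assoc, ← mul_sum, abs_mul, abs_of_pos h1ρ]
      ring
  simpa only [sum_sigma, mul_pow] using this

theorem exists_measure_lt_sum_sum_sq_dyadicIncrement_le (P : Measure Ω) (F : Ω → ℝ → ℝ)
    (a b : ℝ) {r : ℝ} (hr0 : 0 ≤ r) (hr1 : r < 1)
    (h : ∀ δ : ℝ, 0 < δ → ∃ C : ℝ, ∀ (N : ℕ) (e : ℕ → ℝ), (∀ j, |e j| ≤ 1) →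
      P {ω | C < |∑ j ∈ range (2 ^ N), e j * dyadicIncrement (F ω) a b N j|} ≤ ENNReal.ofReal δ)
    (δ : ℝ) (hδ : 0 < δ) :
    ∃ K : ℝ, ∀ N, P {ω | K <
      ∑ n ∈ range N, r ^ n * ∑ k ∈ range (2 ^ n), dyadicIncrement (F ω) a b n k ^ 2} ≤
        ENNReal.ofReal δ := by
  obtain ⟨C, hC⟩ := h (δ / 12) (by positivity)
  refine ⟨2 * (C / (1 - √r)) ^ 2, fun N => ?_⟩
  have := measure_lt_sum_sum_sq_dyadicIncrement_le P F a b (Real.sqrt_nonneg r)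
    ((Real.sqrt_lt' one_pos).mpr (by simpa)) C _ hC N
  simp_rw [mul_pow, ← pow_mul, mul_comm _ 2, pow_mul, Real.sq_sqrt hr0, ← mul_sum] at this
  rwa [← ENNReal.ofReal_ofNat, ← ENNReal.ofReal_mul (by norm_num), mul_div_cancel₀ _ (by norm_num)]
    at this

lemma abs_rpow_le_rpow_sub_two_mul_sq {z M p : ℝ} (hp : 2 ≤ p) (hz : |z| ≤ M) :
    |z| ^ p ≤ M ^ (p - 2) * z ^ 2 := by
  calc |z| ^ p = |z| ^ (p - 2) * |z| ^ (2 : ℝ) := by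
        rw [← Real.rpow_add' (abs_nonneg z) (by linarith), sub_add_cancel]
    _ ≤ M ^ (p - 2) * z ^ 2 := by
        rw [Real.rpow_two, sq_abs]
        gcongr

lemma summable_mul_sum_abs_rpow_dyadicIncrement {f : ℝ → ℝ} {a b : ℝ} (hab : a ≤ b)
    (hf : ContinuousOn f (Set.Icc a b)) {p : ℝ} (hp : 2 ≤ p) {w : ℕ → ℝ} (hw : ∀ n, 0 ≤ w n)
    (hsum : Summable fun n => w n * ∑ k ∈ range (2 ^ n), dyadicIncrement f a b n k ^ 2) :
    Summable fun n => w n * ∑ k ∈ range (2 ^ n), |dyadicIncrement f a b n k| ^ p := by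
  obtain ⟨M, hM⟩ := isCompact_Icc.exists_bound_of_continuousOn hf
  have hincr : ∀ n k, k < 2 ^ n → |dyadicIncrement f a b n k| ≤ 2 * M := fun n k hk => by
    have h1 := hM _ (dyadic_point_mem_Icc hab (n := n) (k := k + 1) hk)
    have h2 := hM _ (dyadic_point_mem_Icc hab (n := n) hk.le)
    push_cast at h1
    rw [Real.norm_eq_abs] at h1 h2
    exact (abs_sub _ _).trans (by linarith)
  refine (hsum.mul_left ((2 * M) ^ (p - 2))).of_nonneg_of_le
    (fun n => mul_nonneg (hw n) (sum_nonneg fun k _ => by positivity)) fun n => ?_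
  calc w n * ∑ k ∈ range (2 ^ n), |dyadicIncrement f a b n k| ^ p ≤
        w n * ∑ k ∈ range (2 ^ n), (2 * M) ^ (p - 2) * dyadicIncrement f a b n k ^ 2 := by
        gcongr with k hk
        · exact hw n
        · exact abs_rpow_le_rpow_sub_two_mul_sq hp (hincr n k (mem_range.mp hk))
    _ = _ := by rw [← mul_sum]; ring

theorem measure_lt_abs_sum_mul_dyadicIncrement_lt (P : Measure Ω) {a b : ℝ} (hab : a ≤ b)
    (μ : Set ℝ → Ω → ℝ)
    (hadd : ∀ s t : ℝ, a ≤ s → s ≤ t → t ≤ b →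
      ∀ᵐ ω ∂P, μ (Set.Ioc s t) ω = μ (Set.Icc a t) ω - μ (Set.Icc a s) ω)
    {C : ℝ} {ε : ℝ≥0∞}
    (hC : ∀ (n : ℕ) (A : Fin n → Set ℝ) (c : Fin n → ℝ),
      (∀ k, MeasurableSet (A k)) → (∀ k, A k ⊆ Set.Icc a b) →
      Pairwise (Function.onFun Disjoint A) → (∀ k, |c k| ≤ 1) →
      P {ω | C < |∑ k, c k * μ (A k) ω|} < ε)
    (N : ℕ) (e : ℕ → ℝ) (he : ∀ j, |e j| ≤ 1) :
    P {ω | C < |∑ j ∈ range (2 ^ N),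
      e j * dyadicIncrement (fun t => μ (Set.Icc a t) ω) a b N j|} < ε := by
  set x : ℕ → ℝ := fun k => a + (k : ℝ) * (b - a) / 2 ^ N
  have hx : Monotone x := fun k k' hk => by
    have := sub_nonneg.mpr hab
    simp only [x]
    gcongr
  have hx_mem : ∀ k : Fin (2 ^ N), x k ∈ Set.Icc a b ∧ x (k + 1) ∈ Set.Icc a b := fun k =>
    ⟨dyadic_point_mem_Icc hab k.isLt.le, dyadic_point_mem_Icc hab k.isLt⟩
  have hincr : ∀ᵐ ω ∂P, ∀ k : Fin (2 ^ N), μ (Set.Ioc (x k) (x (k + 1))) ω =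
      dyadicIncrement (fun t => μ (Set.Icc a t) ω) a b N k := ae_all_iff.mpr fun k => by
    simpa [x, dyadicIncrement] using
      hadd _ _ (hx_mem k).1.1 (hx (Nat.le_succ k)) (hx_mem k).2.2
  have hdisj : Pairwise (Function.onFun Disjoint fun k : Fin (2 ^ N) =>
      Set.Ioc (x k) (x (k + 1))) :=
    hx.pairwise_disjoint_on_Ioc_succ.comp_of_injective Fin.val_injective
  refine (measure_congr (Filter.eventuallyEq_set.mpr (hincr.mono fun ω hω => ?_))).trans_lt
    (hC _ _ (fun k => e k) (fun k => measurableSet_Ioc)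
      (fun k => Set.Ioc_subset_Icc_self.trans (Set.Icc_subset_Icc (hx_mem k).1.1 (hx_mem k).2.2))
      hdisj fun k => he k)
  simp only [Set.mem_ofPred_eq, hω,
    Fin.sum_univ_eq_sum_range (fun j => e j * dyadicIncrement (fun t => μ (Set.Icc a t) ω) a b N j)]

end Probability

theorem stochastic_measure_dyadic_sum_summable_general
    {Ω : Type*} [MeasurableSpace Ω] (P : Measure Ω)
    (a b : ℝ) (hab : a < b)
    (μ : Set ℝ → Ω → ℝ)
    (hbdd : ∀ ε : ℝ, 0 < ε → ∃ C : ℝ, 0 < C ∧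
      ∀ (n : ℕ) (A : Fin n → Set ℝ) (c : Fin n → ℝ),
        (∀ k, MeasurableSet (A k)) →
        (∀ k, A k ⊆ Set.Icc a b) →
        (Pairwise (Function.onFun Disjoint A)) →
        (∀ k, |c k| ≤ 1) →
        P {ω | C < |∑ k, c k * μ (A k) ω|} < ENNReal.ofReal ε)
    (hcont : ∀ᵐ ω ∂P, ContinuousOn (fun t => μ (Set.Icc a t) ω) (Set.Icc a b))
    (hadd : ∀ s t : ℝ, a ≤ s → s ≤ t → t ≤ b →
      ∀ᵐ ω ∂P, μ (Set.Ioc s t) ω = μ (Set.Icc a t) ω - μ (Set.Icc a s) ω)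
    (p α : ℝ) (hp : 2 ≤ p) (hα1 : α < 1 / p) :
    ∀ᵐ ω ∂P, Summable (fun n : ℕ =>
      (2 : ℝ) ^ ((n : ℝ) * (α * p - 1)) *
        ∑ k ∈ Finset.range (2 ^ n),
          |μ (Set.Icc a (a + ((k : ℝ) + 1) * (b - a) / 2 ^ n)) ω -
            μ (Set.Icc a (a + (k : ℝ) * (b - a) / 2 ^ n)) ω| ^ p) := by
  have hαp : α * p - 1 < 0 := by
    have := (lt_div_iff₀ (by linarith : (0 : ℝ) < p)).mp hα1
    linarith
  set r : ℝ := 2 ^ (α * p - 1)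
  have hr0 : 0 ≤ r := by positivity
  have hr1 : r < 1 := Real.rpow_lt_one_of_one_lt_of_neg one_lt_two hαp
  have hweight : ∀ n : ℕ, (2 : ℝ) ^ ((n : ℝ) * (α * p - 1)) = r ^ n := fun n => by
    rw [mul_comm, Real.rpow_mul zero_le_two, Real.rpow_natCast]
  set F : Ω → ℝ → ℝ := fun ω t => μ (Set.Icc a t) ω
  have hsq := ae_bddAbove_range_of_monotone P
    (S := fun N ω => ∑ n ∈ range N, r ^ n * ∑ k ∈ range (2 ^ n), dyadicIncrement (F ω) a b n k ^ 2)
    (fun ω => monotone_nat_of_le_succ fun N => by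
      rw [sum_range_succ]
      exact le_add_of_nonneg_right (by positivity))
    (exists_measure_lt_sum_sum_sq_dyadicIncrement_le P F a b hr0 hr1 fun δ hδ => by
      obtain ⟨C, -, hC⟩ := hbdd δ hδ
      exact ⟨C, fun N e he =>
        (measure_lt_abs_sum_mul_dyadicIncrement_lt P hab.le μ hadd hC N e he).le⟩)
  filter_upwards [hcont, hsq] with ω hω ⟨K, hK⟩
  simp_rw [hweight]
  exact summable_mul_sum_abs_rpow_dyadicIncrement hab.le hω hp (fun n => pow_nonneg hr0 n)
    (summable_of_sum_range_le (fun n => by positivity) fun N => hK ⟨N, rfl⟩)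

/-- **Besov regularity of stochastic measures, dyadic sum convergence.**
Let `μ` be defined on Borel subsets of `[a, b]` with the family of finite sums
`∑ c_k μ(A_k)` (pairwise disjoint measurable `A_k ⊆ [a,b]`, `|c_k| ≤ 1`) bounded in
probability.  Suppose the process `t ↦ μ([a, t])` has continuous paths a.s. and
`μ((s, t]) = μ([a,t]) − μ([a,s])` a.s. for `a ≤ s ≤ t ≤ b`.  Then for `p ≥ 2` and
`0 < α < 1/p`, almost surely
`∑_n 2^{n(αp−1)} ∑_{k=1}^{2^n} |μ(a + k 2⁻ⁿ(b−a)) − μ(a + (k−1) 2⁻ⁿ(b−a))|^p < ∞`. -/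
theorem stochastic_measure_dyadic_sum_summable
    {Ω : Type*} [MeasurableSpace Ω] (P : Measure Ω) [IsProbabilityMeasure P]
    (a b : ℝ) (hab : a < b)
    (μ : Set ℝ → Ω → ℝ)
    (hbdd : ∀ ε : ℝ, 0 < ε → ∃ C : ℝ, 0 < C ∧
      ∀ (n : ℕ) (A : Fin n → Set ℝ) (c : Fin n → ℝ),
        (∀ k, MeasurableSet (A k)) →
        (∀ k, A k ⊆ Set.Icc a b) →
        (Pairwise (Function.onFun Disjoint A)) →
        (∀ k, |c k| ≤ 1) →
        P {ω | C < |∑ k, c k * μ (A k) ω|} < ENNReal.ofReal ε)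
    (hcont : ∀ᵐ ω ∂P, ContinuousOn (fun t => μ (Set.Icc a t) ω) (Set.Icc a b))
    (hadd : ∀ s t : ℝ, a ≤ s → s ≤ t → t ≤ b →
      ∀ᵐ ω ∂P, μ (Set.Ioc s t) ω = μ (Set.Icc a t) ω - μ (Set.Icc a s) ω)
    (p α : ℝ) (hp : 2 ≤ p) (hα0 : 0 < α) (hα1 : α < 1 / p) :
    ∀ᵐ ω ∂P, Summable (fun n : ℕ =>
      (2 : ℝ) ^ ((n : ℝ) * (α * p - 1)) *
        ∑ k ∈ Finset.range (2 ^ n),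
          |μ (Set.Icc a (a + ((k : ℝ) + 1) * (b - a) / 2 ^ n)) ω -
            μ (Set.Icc a (a + (k : ℝ) * (b - a) / 2 ^ n)) ω| ^ p) :=
  stochastic_measure_dyadic_sum_summable_general P a b hab μ hbdd hcont hadd p α hp hα1
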